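/- Let λ/μ be a skew shape with n boxes. For every T ∈ SYT(λ/μ), the diagonal transition coefficient satisfies A_{T,T} = ∏_{(i,j) ∈ inv(T)} (1 + a_{i,j}(T)), the product being over all inversions of T. -/

import Mathlib

open scoped Classical

noncomputable section

/-- A skew shape `λ/μ`: a pair of Young diagrams with `μ ⊆ λ`. -/
structure SkewShape where
  lam : YoungDiagram
  mu : YoungDiagram
  sub : mu ≤ lam

namespace SkewShape

/-- The boxes of the skew shape: boxes of `λ` not in `μ`. -/
def cells (sh : SkewShape) : Finset (ℕ × ℕ) := sh.lam.cells \ sh.mu.cells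

/-- The number `n` of boxes of the skew shape. -/
def nb (sh : SkewShape) : ℕ := sh.cells.card

/-- `f` is a filling of the skew shape with `1, …, n`, each appearing exactly once
(normalized to be `0` off the shape). -/
def IsFilling (sh : SkewShape) (f : ℕ × ℕ → ℕ) : Prop :=
  Set.BijOn f (↑sh.cells) (↑(Finset.Icc 1 sh.nb)) ∧ ∀ b, b ∉ sh.cells → f b = 0

/-- Entries increase from left to right along rows and from top to bottom down columns. -/
def IsRowColStrict (sh : SkewShape) (f : ℕ × ℕ → ℕ) : Prop :=
  (∀ x y : ℕ, (x, y) ∈ sh.cells → (x, y + 1) ∈ sh.cells → f (x, y) < f (x, y + 1)) ∧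
  (∀ x y : ℕ, (x, y) ∈ sh.cells → (x + 1, y) ∈ sh.cells → f (x, y) < f (x + 1, y))

/-- The set of standard Young tableaux of shape `λ/μ`. -/
def SYT (sh : SkewShape) : Set ((ℕ × ℕ) → ℕ) := {f | sh.IsFilling f ∧ sh.IsRowColStrict f}

/-- Standard Young tableaux of shape `λ/μ`, as a type. -/
def SYTt (sh : SkewShape) : Type := {f : (ℕ × ℕ) → ℕ // f ∈ sh.SYT}

/-- The box of the tableau `f` containing the entry `i`. -/
def boxOf (sh : SkewShape) (f : (ℕ × ℕ) → ℕ) (i : ℕ) : ℕ × ℕ :=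
  Function.invFunOn f (↑sh.cells) i

end SkewShape

/-- The content `ct(b) = y - x` of a box `b = (x, y)` (row `x`, column `y`). -/
def ctZ (b : ℕ × ℕ) : ℤ := (b.2 : ℤ) - (b.1 : ℤ)

/-- Exchange the entries `i` and `i+1` in a filling. -/
def sApply (i : ℕ) (f : (ℕ × ℕ) → ℕ) : (ℕ × ℕ) → ℕ := fun b => Equiv.swap i (i + 1) (f b)

/-- Column-reading order on boxes: by column (left to right), then by row (top to bottom). -/
def colLt (b b' : ℕ × ℕ) : Prop := b.2 < b'.2 ∨ (b.2 = b'.2 ∧ b.1 < b'.1)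

namespace SkewShape

/-- The column reading tableau `C` of the skew shape: enter `1, …, n` consecutively down
the columns, filling the columns from left to right. -/
def colReading (sh : SkewShape) : (ℕ × ℕ) → ℕ :=
  fun b => if b ∈ sh.cells then 1 + (sh.cells.filter fun b' => colLt b' b).card else 0

/-- The coefficient `a_{i,j}(T) = 1 / (ct(T(j)) - ct(T(i)))`. -/
def aIJ (sh : SkewShape) (f : (ℕ × ℕ) → ℕ) (i j : ℕ) : ℂ :=
  1 / ((ctZ (sh.boxOf f j) : ℂ) - (ctZ (sh.boxOf f i) : ℂ))

/-- The coefficient `a_i(T) = a_{i,i+1}(T)`. -/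
def aI (sh : SkewShape) (f : (ℕ × ℕ) → ℕ) (i : ℕ) : ℂ := sh.aIJ f i (i + 1)

/-- The seminormal basis vector `v_f` (or `0` if `f` is not standard). -/
def vOf (sh : SkewShape) (f : (ℕ × ℕ) → ℕ) : sh.SYTt →₀ ℂ :=
  if h : f ∈ sh.SYT then Finsupp.single ⟨f, h⟩ 1 else 0

/-- The seminormal operator of the simple transposition `s_i`:
`σ_i v_T = a_i(T) v_T + (1 + a_i(T)) v_{s_i(T)}`. -/
def semiOp (sh : SkewShape) (i : ℕ) : (sh.SYTt →₀ ℂ) →ₗ[ℂ] (sh.SYTt →₀ ℂ) :=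
  Finsupp.lsum ℂ fun T : sh.SYTt =>
    LinearMap.toSpanSingleton ℂ _
      (sh.aI T.1 i • sh.vOf T.1 + (1 + sh.aI T.1 i) • sh.vOf (sApply i T.1))

/-- `opWord sh [i_1, …, i_k] = σ_{i_1} ∘ σ_{i_2} ∘ ⋯ ∘ σ_{i_k}`. -/
def opWord (sh : SkewShape) : List ℕ → ((sh.SYTt →₀ ℂ) →ₗ[ℂ] (sh.SYTt →₀ ℂ))
  | [] => LinearMap.id
  | i :: is => semiOp sh i ∘ₗ opWord sh is

end SkewShape

/-- The permutation `s_{i_1} s_{i_2} ⋯ s_{i_k}` determined by a list of indices. -/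
def wordProd (l : List ℕ) : Equiv.Perm ℕ := (l.map fun i => Equiv.swap i (i + 1)).prod

/-- The letters of the word index simple transpositions `s_1, …, s_{n-1}` of `S_n`. -/
def IsSnWord (n : ℕ) (l : List ℕ) : Prop := ∀ i ∈ l, 1 ≤ i ∧ i + 1 ≤ n

/-- `l` is a reduced word for `w` in `S_n`. -/
def IsReducedWord (n : ℕ) (w : Equiv.Perm ℕ) (l : List ℕ) : Prop :=
  IsSnWord n l ∧ wordProd l = w ∧
    ∀ l' : List ℕ, IsSnWord n l' → wordProd l' = w → l.length ≤ l'.length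

/-- The Coxeter length of `w` in `S_n`: the minimal number of simple transpositions
in a word for `w`. -/
def permLength (n : ℕ) (w : Equiv.Perm ℕ) : ℕ :=
  sInf {k | ∃ l : List ℕ, IsSnWord n l ∧ l.length = k ∧ wordProd l = w}

/-- Bruhat order on `S_n`: `σ ≤ τ` iff some reduced word for `τ` contains a subword
that is a reduced word for `σ`. -/
def BruhatLE (n : ℕ) (σ τ : Equiv.Perm ℕ) : Prop :=
  ∃ lτ : List ℕ, IsReducedWord n τ lτ ∧ ∃ lσ : List ℕ, lσ.Sublist lτ ∧ IsReducedWord n σ lσ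

namespace SkewShape

/-- `w` is the word `w_f` of the tableau `f`: `w(C) = f`, with `w` fixing everything
outside `{1, …, n}`. -/
def IsWordOf (sh : SkewShape) (f : (ℕ × ℕ) → ℕ) (w : Equiv.Perm ℕ) : Prop :=
  (∀ b ∈ sh.cells, w (sh.colReading b) = f b) ∧ ∀ m, m ∉ Finset.Icc 1 sh.nb → w m = m

/-- Bruhat order on standard tableaux: `S ≤ T` iff `w_S ≤ w_T` in Bruhat order on `S_n`. -/
def tabLE (sh : SkewShape) (f g : (ℕ × ℕ) → ℕ) : Prop :=
  ∃ wf wg : Equiv.Perm ℕ, sh.IsWordOf f wf ∧ sh.IsWordOf g wg ∧ BruhatLE sh.nb wf wg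

end SkewShape

/-- Apply the letters of a list, left to right, to a filling. -/
def applyWord : List ℕ → ((ℕ × ℕ) → ℕ) → ((ℕ × ℕ) → ℕ)
  | [], f => f
  | i :: is, f => applyWord is (sApply i f)

namespace SkewShape

/-- `(f, [i_1, …, i_k])` is a path `f →^{s_{i_1}} ⋯ →^{s_{i_k}}` in the weak Bruhat graph:
every tableau along the way is standard. -/
def IsPath (sh : SkewShape) : ((ℕ × ℕ) → ℕ) → List ℕ → Prop
  | f, [] => f ∈ sh.SYT
  | f, i :: is => f ∈ sh.SYT ∧ sh.IsPath (sApply i f) is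

/-- `(f, [i_1, …, i_k], [z_1, …, z_k])` is a subpath of the path starting at `f` with letters
`[i_1, …, i_k]`; at step `j` one moves by `s_{i_j}` if `z_j = true` and waits otherwise.
All intermediate tableaux must be standard. -/
def IsSubpath (sh : SkewShape) : ((ℕ × ℕ) → ℕ) → List ℕ → List Bool → Prop
  | f, [], [] => f ∈ sh.SYT
  | f, i :: is, z :: zs => f ∈ sh.SYT ∧ sh.IsSubpath (if z then sApply i f else f) is zs
  | _, _, _ => False

end SkewShape

/-- The tableau at which a subpath terminates. -/
def subEnd : ((ℕ × ℕ) → ℕ) → List ℕ → List Bool → ((ℕ × ℕ) → ℕ)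
  | f, [], _ => f
  | f, _ :: _, [] => f
  | f, i :: is, z :: zs => subEnd (if z then sApply i f else f) is zs

namespace SkewShape

/-- The `π`-weight of a subpath: the product of `a_{i_j}(S_{j-1})` over waiting steps and
`1 + a_{i_j}(S_{j-1})` over moving steps. -/
def subWeight (sh : SkewShape) : ((ℕ × ℕ) → ℕ) → List ℕ → List Bool → ℂ
  | _, [], _ => 1
  | _, _ :: _, [] => 1
  | f, i :: is, z :: zs =>
      (if z then 1 + sh.aI f i else sh.aI f i) * sh.subWeight (if z then sApply i f else f) is zs

/-- The transition coefficient computed from a path: the sum of `π`-weights of all subpaths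
of the path `(f₀, is)` terminating at `g`. -/
def pathCoeff (sh : SkewShape) (f₀ : (ℕ × ℕ) → ℕ) (is : List ℕ) (g : (ℕ × ℕ) → ℕ) : ℂ :=
  ∑ zs : Fin is.length → Bool,
    if sh.IsSubpath f₀ is (List.ofFn zs) ∧ subEnd f₀ is (List.ofFn zs) = g then
      sh.subWeight f₀ is (List.ofFn zs)
    else 0

/-- The coefficient of `v_g` in `(σ_{i_1} ∘ ⋯ ∘ σ_{i_k})(v_C)` (or `0` if `g` is not
standard). -/
def natCoeff (sh : SkewShape) (l : List ℕ) (g : (ℕ × ℕ) → ℕ) : ℂ :=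
  if h : g ∈ sh.SYT then (sh.opWord l (sh.vOf sh.colReading)) ⟨g, h⟩ else 0

end SkewShape

end

namespace SkewShape

/-- The set of inversions of a tableau: pairs `(i, j)` with `i > j` such that `i` lies
strictly south and strictly west of `j`. -/
noncomputable def invSet (sh : SkewShape) (f : (ℕ × ℕ) → ℕ) : Finset (ℕ × ℕ) :=
  (Finset.Icc 1 sh.nb ×ˢ Finset.Icc 1 sh.nb).filter fun p =>
    p.2 < p.1 ∧ (sh.boxOf f p.2).1 < (sh.boxOf f p.1).1 ∧ (sh.boxOf f p.1).2 < (sh.boxOf f p.2).2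

end SkewShape
namespace SkewShape

variable {sh : SkewShape}

lemma mem_cells_iff {r c : ℕ} :
    (r, c) ∈ sh.cells ↔ (r, c) ∈ sh.lam ∧ (r, c) ∉ sh.mu := by
  simp [cells, YoungDiagram.mem_cells]

lemma cells_interp {r c r' c' r'' c'' : ℕ} (h : (r, c) ∈ sh.cells)
    (h' : (r', c') ∈ sh.cells) (h1 : r ≤ r'') (h2 : r'' ≤ r') (h3 : c ≤ c'')
    (h4 : c'' ≤ c') : (r'', c'') ∈ sh.cells := by
  rw [mem_cells_iff] at *
  exact ⟨sh.lam.up_left_mem h2 h4 h'.1, fun hm => h.2 (sh.mu.up_left_mem h1 h3 hm)⟩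

lemma lt_of_col {f : (ℕ × ℕ) → ℕ} (hf : f ∈ sh.SYT) {r r' c : ℕ}
    (h : (r, c) ∈ sh.cells) (h' : (r', c) ∈ sh.cells) (hr : r < r') :
    f (r, c) < f (r', c) := by
  induction r' with
  | zero => omega
  | succ R ih =>
    rcases Nat.lt_or_ge r R with hlt | hge
    · have hmid : (R, c) ∈ sh.cells :=
        cells_interp h h' (le_of_lt hlt) (Nat.le_succ R) le_rfl le_rfl
      exact lt_trans (ih hmid hlt) (hf.2.2 R c hmid h')
    · have hrR : r = R := by omega
      subst hrR
      exact hf.2.2 r c h h'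

lemma lt_of_row {f : (ℕ × ℕ) → ℕ} (hf : f ∈ sh.SYT) {r c c' : ℕ}
    (h : (r, c) ∈ sh.cells) (h' : (r, c') ∈ sh.cells) (hc : c < c') :
    f (r, c) < f (r, c') := by
  induction c' with
  | zero => omega
  | succ Cc ih =>
    rcases Nat.lt_or_ge c Cc with hlt | hge
    · have hmid : (r, Cc) ∈ sh.cells :=
        cells_interp h h' le_rfl le_rfl (le_of_lt hlt) (Nat.le_succ Cc)
      exact lt_trans (ih hmid hlt) (hf.2.1 r Cc hmid h')
    · have hcC : c = Cc := by omega
      subst hcC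
      exact hf.2.1 r c h h'

/-- The key "southwest" lemma: in a standard tableau, entries strictly increase
to the weak southeast. -/
lemma sw_lt {f : (ℕ × ℕ) → ℕ} (hf : f ∈ sh.SYT) {r c r' c' : ℕ}
    (h : (r, c) ∈ sh.cells) (h' : (r', c') ∈ sh.cells) (hr : r ≤ r') (hc : c ≤ c')
    (hne : (r, c) ≠ (r', c')) : f (r, c) < f (r', c') := by
  have hcorner : (r', c) ∈ sh.cells := cells_interp h h' hr le_rfl le_rfl hc
  rcases Nat.lt_or_ge r r' with h1 | h1
  · have hcol := lt_of_col hf h hcorner h1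
    rcases Nat.lt_or_ge c c' with h2 | h2
    · exact lt_trans hcol (lt_of_row hf hcorner h' h2)
    · have : c = c' := by omega
      subst this; exact hcol
  · have : r = r' := by omega
    subst this
    have hcc : c ≠ c' := fun hcc => hne (by rw [hcc])
    exact lt_of_row hf h h' (by omega)

lemma boxOf_spec {f : (ℕ × ℕ) → ℕ} (hf : sh.IsFilling f) {e : ℕ}
    (he : e ∈ Finset.Icc 1 sh.nb) :
    sh.boxOf f e ∈ sh.cells ∧ f (sh.boxOf f e) = e := by
  have hex : ∃ a ∈ (↑sh.cells : Set (ℕ × ℕ)), f a = e := by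
    have h2 : e ∈ f '' ↑sh.cells := hf.1.2.2 (by exact_mod_cast he)
    rcases h2 with ⟨a, ha, rfl⟩; exact ⟨a, ha, rfl⟩
  exact ⟨by exact_mod_cast Function.invFunOn_mem hex, Function.invFunOn_eq hex⟩

lemma boxOf_eq {f : (ℕ × ℕ) → ℕ} (hf : sh.IsFilling f) {b : ℕ × ℕ}
    (hb : b ∈ sh.cells) : sh.boxOf f (f b) = b :=
  hf.1.2.1.leftInvOn_invFunOn (Finset.mem_coe.mpr hb)

lemma boxOf_eq' {f : (ℕ × ℕ) → ℕ} (hf : sh.IsFilling f) {b : ℕ × ℕ} {e : ℕ}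
    (hb : b ∈ sh.cells) (hbe : f b = e) : sh.boxOf f e = b := by
  subst hbe; exact boxOf_eq hf hb

lemma entry_mem {f : (ℕ × ℕ) → ℕ} (hf : sh.IsFilling f) {b : ℕ × ℕ}
    (hb : b ∈ sh.cells) : f b ∈ Finset.Icc 1 sh.nb := by
  have := hf.1.1 (Finset.mem_coe.mpr hb)
  exact_mod_cast this

end SkewShape
namespace SkewShape

variable {sh : SkewShape}

lemma swap_mem_Icc {n m x : ℕ} (hm : 1 ≤ m) (hm2 : m + 1 ≤ n)
    (hx : x ∈ Finset.Icc 1 n) : Equiv.swap m (m + 1) x ∈ Finset.Icc 1 n := by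
  simp only [Finset.mem_Icc] at *
  rw [Equiv.swap_apply_def]
  split_ifs <;> omega

lemma swap_lt_swap {m i j : ℕ} (hji : j < i) (hne : (i, j) ≠ (m + 1, m)) :
    Equiv.swap m (m + 1) j < Equiv.swap m (m + 1) i := by
  simp only [ne_eq, Prod.mk.injEq, not_and] at hne
  simp only [Equiv.swap_apply_def]
  split_ifs <;> omega

lemma sApply_sApply (m : ℕ) (f : (ℕ × ℕ) → ℕ) : sApply m (sApply m f) = f := by
  funext b; simp [sApply]

lemma sApply_isFilling {f : (ℕ × ℕ) → ℕ} (hf : sh.IsFilling f) {m : ℕ}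
    (hm : 1 ≤ m) (hm2 : m + 1 ≤ sh.nb) : sh.IsFilling (sApply m f) := by
  constructor
  · have hswap : Set.BijOn (Equiv.swap m (m + 1))
        (↑(Finset.Icc 1 sh.nb)) (↑(Finset.Icc 1 sh.nb)) := by
      refine ⟨fun x hx => ?_, (Equiv.swap m (m + 1)).injective.injOn, fun y hy => ?_⟩
      · exact_mod_cast swap_mem_Icc hm hm2 (by exact_mod_cast hx)
      · refine ⟨Equiv.swap m (m + 1) y, ?_, Equiv.swap_apply_self _ _ _⟩
        exact_mod_cast swap_mem_Icc hm hm2 (by exact_mod_cast hy)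
    exact hswap.comp hf.1
  · intro b hb
    have h0 : f b = 0 := hf.2 b hb
    simp only [sApply, h0]
    exact Equiv.swap_apply_of_ne_of_ne (by omega) (by omega)

lemma boxOf_sApply {f : (ℕ × ℕ) → ℕ} (hf : sh.IsFilling f) {m : ℕ}
    (hm : 1 ≤ m) (hm2 : m + 1 ≤ sh.nb) {e : ℕ} (he : e ∈ Finset.Icc 1 sh.nb) :
    sh.boxOf (sApply m f) e = sh.boxOf f (Equiv.swap m (m + 1) e) := by
  have hse : Equiv.swap m (m + 1) e ∈ Finset.Icc 1 sh.nb := swap_mem_Icc hm hm2 he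
  obtain ⟨hbmem, hbval⟩ := boxOf_spec hf hse
  refine boxOf_eq' (sApply_isFilling hf hm hm2) hbmem ?_
  simp [sApply, hbval]

lemma sApply_ne {f : (ℕ × ℕ) → ℕ} (hf : sh.IsFilling f) {m : ℕ}
    (hm : 1 ≤ m) (hm2 : m + 1 ≤ sh.nb) : sApply m f ≠ f := by
  intro hEq
  have hmem : m ∈ Finset.Icc 1 sh.nb := by simp only [Finset.mem_Icc]; omega
  obtain ⟨hb, hbv⟩ := boxOf_spec hf hmem
  have := congrFun hEq (sh.boxOf f m)
  rw [sApply, hbv, Equiv.swap_apply_left] at this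
  omega

lemma mem_invSet {f : (ℕ × ℕ) → ℕ} {i j : ℕ} :
    (i, j) ∈ sh.invSet f ↔ (i ∈ Finset.Icc 1 sh.nb ∧ j ∈ Finset.Icc 1 sh.nb) ∧
      j < i ∧ (sh.boxOf f j).1 < (sh.boxOf f i).1 ∧ (sh.boxOf f i).2 < (sh.boxOf f j).2 := by
  simp [invSet, Finset.mem_filter, Finset.mem_product]

/-- Relabelling of inversions under an adjacent swap. -/
lemma invSet_relabel {f : (ℕ × ℕ) → ℕ} (hf : sh.IsFilling f) {m : ℕ}
    (hm : 1 ≤ m) (hm2 : m + 1 ≤ sh.nb) {i j : ℕ} (hp : (i, j) ∈ sh.invSet f)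
    (hne : (i, j) ≠ (m + 1, m)) :
    (Equiv.swap m (m + 1) i, Equiv.swap m (m + 1) j) ∈ sh.invSet (sApply m f) := by
  rw [mem_invSet] at hp ⊢
  obtain ⟨⟨hi, hj⟩, hji, h1, h2⟩ := hp
  refine ⟨⟨swap_mem_Icc hm hm2 hi, swap_mem_Icc hm hm2 hj⟩, swap_lt_swap hji hne, ?_, ?_⟩
  · rwa [boxOf_sApply hf hm hm2 (swap_mem_Icc hm hm2 hj),
      boxOf_sApply hf hm hm2 (swap_mem_Icc hm hm2 hi),
      Equiv.swap_apply_self, Equiv.swap_apply_self]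
  · rwa [boxOf_sApply hf hm hm2 (swap_mem_Icc hm hm2 hj),
      boxOf_sApply hf hm hm2 (swap_mem_Icc hm hm2 hi),
      Equiv.swap_apply_self, Equiv.swap_apply_self]

lemma not_mem_invSet_pair_both {f : (ℕ × ℕ) → ℕ} (hf : sh.IsFilling f) {m : ℕ}
    (hm : 1 ≤ m) (hm2 : m + 1 ≤ sh.nb) (h : (m + 1, m) ∈ sh.invSet f) :
    (m + 1, m) ∉ sh.invSet (sApply m f) := by
  intro h'
  rw [mem_invSet] at h h'
  obtain ⟨⟨hi, hj⟩, -, h1, h2⟩ := h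
  obtain ⟨-, -, h1', h2'⟩ := h'
  rw [boxOf_sApply hf hm hm2 hj, boxOf_sApply hf hm hm2 hi,
    Equiv.swap_apply_left, Equiv.swap_apply_right] at h1' h2'
  omega

/-- The fundamental cardinality identity for inversion sets under an adjacent swap. -/
lemma card_invSet_sApply {f : (ℕ × ℕ) → ℕ} (hf : sh.IsFilling f) {m : ℕ}
    (hm : 1 ≤ m) (hm2 : m + 1 ≤ sh.nb) :
    (sh.invSet (sApply m f)).card + (if (m + 1, m) ∈ sh.invSet f then 1 else 0)
      = (sh.invSet f).card + (if (m + 1, m) ∈ sh.invSet (sApply m f) then 1 else 0) := by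
  classical
  set P : ℕ × ℕ := (m + 1, m) with hP
  set σ : ℕ × ℕ → ℕ × ℕ := fun p => (Equiv.swap m (m + 1) p.1, Equiv.swap m (m + 1) p.2)
    with hσ
  have hσinj : Function.Injective σ := by
    intro p q hpq
    simp only [hσ, Prod.mk.injEq] at hpq
    have e1 := (Equiv.swap m (m + 1)).injective hpq.1
    have e2 := (Equiv.swap m (m + 1)).injective hpq.2
    exact Prod.ext e1 e2
  have key : ∀ g : (ℕ × ℕ) → ℕ, sh.IsFilling g →
      ((sh.invSet (sApply m g)).erase P) ⊆ ((sh.invSet g).erase P).image σ := by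
    intro g hg q hq
    rw [Finset.mem_erase] at hq
    have hg' : sh.IsFilling (sApply m g) := sApply_isFilling hg hm hm2
    obtain ⟨i, j⟩ := q
    have hrel : (Equiv.swap m (m + 1) i, Equiv.swap m (m + 1) j)
        ∈ sh.invSet (sApply m (sApply m g)) := invSet_relabel hg' hm hm2 hq.2 hq.1
    rw [sApply_sApply] at hrel
    rw [Finset.mem_image]
    refine ⟨(Equiv.swap m (m + 1) i, Equiv.swap m (m + 1) j), ?_, ?_⟩
    · rw [Finset.mem_erase]
      refine ⟨?_, hrel⟩
      intro hEq
      simp only [hP, Prod.mk.injEq] at hEq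
      have hi' : i = m := by
        have h3 := congrArg (Equiv.swap m (m+1)) hEq.1
        rwa [Equiv.swap_apply_self, Equiv.swap_apply_right] at h3
      have hj' : j = m + 1 := by
        have h3 := congrArg (Equiv.swap m (m+1)) hEq.2
        rwa [Equiv.swap_apply_self, Equiv.swap_apply_left] at h3
      subst hi'; subst hj'
      rw [mem_invSet] at hq
      omega
    · simp [hσ, Equiv.swap_apply_self]
  have h1 : ((sh.invSet (sApply m f)).erase P) = ((sh.invSet f).erase P).image σ := by
    apply Finset.Subset.antisymm (key f hf)
    intro q hq
    rw [Finset.mem_image] at hq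
    obtain ⟨p, hp, rfl⟩ := hq
    have hf' : sh.IsFilling (sApply m f) := sApply_isFilling hf hm hm2
    have := key (sApply m f) hf'
    rw [sApply_sApply] at this
    -- show σ p ∈ erase P (invSet (sApply m f))
    rw [Finset.mem_erase] at hp ⊢
    obtain ⟨i, j⟩ := p
    refine ⟨?_, invSet_relabel hf hm hm2 hp.2 hp.1⟩
    intro hEq
    simp only [hσ, hP, Prod.mk.injEq] at hEq
    have hi' : i = m := by
      have h3 := congrArg (Equiv.swap m (m+1)) hEq.1
      rwa [Equiv.swap_apply_self, Equiv.swap_apply_right] at h3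
    have hj' : j = m + 1 := by
      have h3 := congrArg (Equiv.swap m (m+1)) hEq.2
      rwa [Equiv.swap_apply_self, Equiv.swap_apply_left] at h3
    subst hi'; subst hj'
    rw [mem_invSet] at hp
    omega
  have hcard : ((sh.invSet (sApply m f)).erase P).card = ((sh.invSet f).erase P).card := by
    rw [h1, Finset.card_image_of_injective _ hσinj]
  by_cases hPf : P ∈ sh.invSet f <;> by_cases hPg : P ∈ sh.invSet (sApply m f) <;>
    simp only [hPf, hPg, if_true, if_false] <;>
    [skip; skip; skip; skip] <;>
    first
    | (exfalso; exact not_mem_invSet_pair_both hf hm hm2 hPf hPg)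
    | (have e1 := Finset.card_erase_of_mem hPf
       have e2 := Finset.card_erase_of_mem hPg
       have c1 : 0 < (sh.invSet f).card := Finset.card_pos.mpr ⟨P, hPf⟩
       omega)
    | (have e1 := Finset.card_erase_of_mem hPf
       have e2 : ((sh.invSet (sApply m f)).erase P) = sh.invSet (sApply m f) :=
         Finset.erase_eq_of_notMem hPg
       have c1 : 0 < (sh.invSet f).card := Finset.card_pos.mpr ⟨P, hPf⟩
       rw [e2] at hcard; omega)
    | (have e2 := Finset.card_erase_of_mem hPg
       have e1 : ((sh.invSet f).erase P) = sh.invSet f := Finset.erase_eq_of_notMem hPf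
       have c2 : 0 < (sh.invSet (sApply m f)).card := Finset.card_pos.mpr ⟨P, hPg⟩
       rw [e1] at hcard; omega)
    | (have e1 : ((sh.invSet f).erase P) = sh.invSet f := Finset.erase_eq_of_notMem hPf
       have e2 : ((sh.invSet (sApply m f)).erase P) = sh.invSet (sApply m f) :=
         Finset.erase_eq_of_notMem hPg
       rw [e1, e2] at hcard; omega)

end SkewShape
namespace SkewShape

variable {sh : SkewShape}

lemma colLt_trans {a b c : ℕ × ℕ} (h1 : colLt a b) (h2 : colLt b c) : colLt a c := by
  rcases h1 with h1 | ⟨h1, h1'⟩ <;> rcases h2 with h2 | ⟨h2, h2'⟩ <;>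
    simp only [colLt] <;> omega

lemma colLt_irrefl (a : ℕ × ℕ) : ¬ colLt a a := by simp [colLt]

lemma colLt_trichot {a b : ℕ × ℕ} (h : a ≠ b) : colLt a b ∨ colLt b a := by
  obtain ⟨a1, a2⟩ := a; obtain ⟨b1, b2⟩ := b
  simp only [ne_eq, Prod.mk.injEq, not_and] at h
  simp only [colLt]
  by_cases h2 : a2 = b2
  · subst h2
    have : a1 ≠ b1 := by intro hEq; exact h hEq rfl
    omega
  · omega

lemma colReading_apply {b : ℕ × ℕ} (hb : b ∈ sh.cells) :
    sh.colReading b = 1 + (sh.cells.filter fun b' => colLt b' b).card := by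
  rw [colReading, if_pos hb]

lemma colReading_strictMono {b b' : ℕ × ℕ} (hb : b ∈ sh.cells) (hb' : b' ∈ sh.cells)
    (h : colLt b b') : sh.colReading b < sh.colReading b' := by
  rw [colReading_apply hb, colReading_apply hb']
  have hss : (sh.cells.filter fun x => colLt x b) ⊂ (sh.cells.filter fun x => colLt x b') := by
    constructor
    · intro x hx
      rw [Finset.mem_filter] at hx ⊢
      exact ⟨hx.1, colLt_trans hx.2 h⟩
    · intro hsub
      have : b ∈ sh.cells.filter fun x => colLt x b := hsub (by
        rw [Finset.mem_filter]; exact ⟨hb, h⟩)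
      rw [Finset.mem_filter] at this
      exact colLt_irrefl b this.2
  have := Finset.card_lt_card hss
  omega

lemma colReading_mem_Icc {b : ℕ × ℕ} (hb : b ∈ sh.cells) :
    sh.colReading b ∈ Finset.Icc 1 sh.nb := by
  rw [colReading_apply hb, Finset.mem_Icc]
  constructor
  · omega
  · have hsub : (sh.cells.filter fun b' => colLt b' b) ⊆ sh.cells.erase b := by
      intro x hx
      rw [Finset.mem_filter] at hx
      rw [Finset.mem_erase]
      refine ⟨?_, hx.1⟩
      intro hEq; subst hEq; exact colLt_irrefl x hx.2
    have h1 := Finset.card_le_card hsub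
    have h2 := Finset.card_erase_of_mem hb
    have h3 : 0 < sh.cells.card := Finset.card_pos.mpr ⟨b, hb⟩
    unfold nb
    omega

lemma colReading_SYT : sh.colReading ∈ sh.SYT := by
  have hinj : Set.InjOn sh.colReading ↑sh.cells := by
    intro x hx y hy hEq
    by_contra hne
    rcases colLt_trichot hne with h | h
    · have := colReading_strictMono (Finset.mem_coe.mp hx) (Finset.mem_coe.mp hy) h
      omega
    · have := colReading_strictMono (Finset.mem_coe.mp hy) (Finset.mem_coe.mp hx) h
      omega
  have himg : sh.cells.image sh.colReading = Finset.Icc 1 sh.nb := by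
    apply Finset.eq_of_subset_of_card_le
    · intro y hy
      rw [Finset.mem_image] at hy
      obtain ⟨b, hb, rfl⟩ := hy
      exact colReading_mem_Icc hb
    · rw [Finset.card_image_of_injOn (by exact_mod_cast hinj)]
      rw [Nat.card_Icc]
      unfold nb
      omega
  refine ⟨⟨⟨?_, hinj, ?_⟩, ?_⟩, ?_, ?_⟩
  · intro b hb
    exact_mod_cast colReading_mem_Icc (Finset.mem_coe.mp hb)
  · intro y hy
    have : y ∈ sh.cells.image sh.colReading := by
      rw [himg]; exact_mod_cast hy
    rw [Finset.mem_image] at this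
    obtain ⟨b, hb, rfl⟩ := this
    exact ⟨b, Finset.mem_coe.mpr hb, rfl⟩
  · intro b hb
    rw [colReading, if_neg hb]
  · intro x y hxy hxy'
    exact colReading_strictMono hxy hxy' (Or.inl (by omega))
  · intro x y hxy hxy'
    exact colReading_strictMono hxy hxy' (Or.inr ⟨rfl, by omega⟩)

lemma invSet_colReading : sh.invSet sh.colReading = ∅ := by
  rw [Finset.eq_empty_iff_forall_notMem]
  rintro ⟨i, j⟩ hp
  rw [mem_invSet] at hp
  obtain ⟨⟨hi, hj⟩, hji, h1, h2⟩ := hp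
  have hC : sh.IsFilling sh.colReading := colReading_SYT.1
  obtain ⟨hbi, hbival⟩ := boxOf_spec hC hi
  obtain ⟨hbj, hbjval⟩ := boxOf_spec hC hj
  have : sh.colReading (sh.boxOf sh.colReading i) < sh.colReading (sh.boxOf sh.colReading j) :=
    colReading_strictMono hbi hbj (Or.inl h2)
  omega

lemma eq_colReading_of_invSet_empty {f : (ℕ × ℕ) → ℕ} (hf : f ∈ sh.SYT)
    (hinv : sh.invSet f = ∅) : f = sh.colReading := by
  have hmono : ∀ b ∈ sh.cells, ∀ b' ∈ sh.cells, colLt b b' → f b < f b' := by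
    intro b hb b' hb' hlt
    by_contra hge
    have hne : b ≠ b' := by intro hEq; subst hEq; exact colLt_irrefl b hlt
    have hfne : f b ≠ f b' := by
      intro hEq
      exact hne (hf.1.1.2.1 (Finset.mem_coe.mpr hb) (Finset.mem_coe.mpr hb') hEq)
    have hgt : f b' < f b := by omega
    rcases hlt with hcol | ⟨hcol, hrow⟩
    · -- col b < col b'
      rcases Nat.lt_or_ge b'.1 b.1 with hr | hr
      · -- row b > row b' : genuine inversion (f b, f b')
        have hmem : (f b, f b') ∈ sh.invSet f := by
          rw [mem_invSet]
          refine ⟨⟨entry_mem hf.1 hb, entry_mem hf.1 hb'⟩, hgt, ?_, ?_⟩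
          · rw [boxOf_eq hf.1 hb, boxOf_eq hf.1 hb']; exact hr
          · rw [boxOf_eq hf.1 hb, boxOf_eq hf.1 hb']; exact hcol
        rw [hinv] at hmem
        exact absurd hmem (Finset.notMem_empty _)
      · -- row b ≤ row b' : southwest lemma gives f b < f b'
        have : f (b.1, b.2) < f (b'.1, b'.2) := by
          apply sw_lt hf (by simpa using hb) (by simpa using hb') hr (le_of_lt hcol)
          intro hEq
          apply hne
          simpa [Prod.ext_iff] using hEq
        simp only [Prod.mk.eta] at this
        omega
    · -- same column, row b < row b'
      have : f (b.1, b.2) < f (b'.1, b'.2) := by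
        apply sw_lt hf (by simpa using hb) (by simpa using hb') (le_of_lt hrow) (le_of_eq hcol)
        intro hEq
        apply hne
        simpa [Prod.ext_iff] using hEq
      simp only [Prod.mk.eta] at this
      omega
  funext b
  by_cases hb : b ∈ sh.cells
  · have hk := entry_mem hf.1 hb
    rw [Finset.mem_Icc] at hk
    have himg : (sh.cells.filter fun b' => colLt b' b).image f
        = (Finset.Icc 1 sh.nb).filter fun y => y < f b := by
      apply Finset.Subset.antisymm
      · intro y hy
        rw [Finset.mem_image] at hy
        obtain ⟨x, hx, rfl⟩ := hy
        rw [Finset.mem_filter] at hx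
        rw [Finset.mem_filter]
        exact ⟨entry_mem hf.1 hx.1, hmono x hx.1 b hb hx.2⟩
      · intro y hy
        rw [Finset.mem_filter] at hy
        have hy' : y ∈ f '' ↑sh.cells := hf.1.1.2.2 (by exact_mod_cast hy.1)
        obtain ⟨x, hx, rfl⟩ := hy'
        have hx' : x ∈ sh.cells := Finset.mem_coe.mp hx
        rw [Finset.mem_image]
        refine ⟨x, ?_, rfl⟩
        rw [Finset.mem_filter]
        refine ⟨hx', ?_⟩
        have hxb : x ≠ b := by intro hEq; subst hEq; omega
        rcases colLt_trichot hxb with h | h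
        · exact h
        · have := hmono b hb x hx' h
          omega
    have hcard1 : ((sh.cells.filter fun b' => colLt b' b).image f).card
        = (sh.cells.filter fun b' => colLt b' b).card := by
      apply Finset.card_image_of_injOn
      intro x hx y hy hEq
      exact hf.1.1.2.1 (Finset.mem_coe.mpr (Finset.mem_filter.mp hx).1)
        (Finset.mem_coe.mpr (Finset.mem_filter.mp hy).1) hEq
    have hcard2 : ((Finset.Icc 1 sh.nb).filter fun y => y < f b) = Finset.Icc 1 (f b - 1) := by
      ext x
      rw [Finset.mem_filter, Finset.mem_Icc, Finset.mem_Icc]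
      omega
    rw [hcard2] at himg
    have : (sh.cells.filter fun b' => colLt b' b).card = f b - 1 := by
      rw [← hcard1, himg, Nat.card_Icc]
      omega
    rw [colReading_apply hb, this]
    omega
  · rw [hf.1.2 b hb, colReading, if_neg hb]

end SkewShape
namespace SkewShape

variable {sh : SkewShape}

lemma exists_adj_inv {f : (ℕ × ℕ) → ℕ} (hf : f ∈ sh.SYT)
    (hne : (sh.invSet f).Nonempty) : ∃ m, (m + 1, m) ∈ sh.invSet f := by
  obtain ⟨p, hp, hmin⟩ := Finset.exists_min_image (sh.invSet f) (fun p => p.1 - p.2) hne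
  obtain ⟨i, j⟩ := p
  have hp' := hp
  rw [mem_invSet] at hp'
  obtain ⟨⟨hi, hj⟩, hji, h1, h2⟩ := hp'
  rcases Nat.lt_or_ge (j + 1) i with hlt | hge
  · -- i ≥ j + 2 : derive a contradiction
    exfalso
    set k := j + 1 with hk
    have hkIcc : k ∈ Finset.Icc 1 sh.nb := by
      rw [Finset.mem_Icc] at *
      omega
    obtain ⟨hbi, hbiv⟩ := boxOf_spec hf.1 hi
    obtain ⟨hbj, hbjv⟩ := boxOf_spec hf.1 hj
    obtain ⟨hbk, hbkv⟩ := boxOf_spec hf.1 hkIcc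
    -- (k, j) not an inversion (minimality)
    have hkj : ¬((sh.boxOf f j).1 < (sh.boxOf f k).1 ∧ (sh.boxOf f k).2 < (sh.boxOf f j).2) := by
      intro hcon
      have : (k, j) ∈ sh.invSet f := by
        rw [mem_invSet]; exact ⟨⟨hkIcc, hj⟩, by omega, hcon.1, hcon.2⟩
      have := hmin _ this
      simp only at this
      omega
    -- (i, k) not an inversion (minimality)
    have hik : ¬((sh.boxOf f k).1 < (sh.boxOf f i).1 ∧ (sh.boxOf f i).2 < (sh.boxOf f k).2) := by
      intro hcon
      have : (i, k) ∈ sh.invSet f := by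
        rw [mem_invSet]; exact ⟨⟨hi, hkIcc⟩, by omega, hcon.1, hcon.2⟩
      have := hmin _ this
      simp only at this
      omega
    -- southwest lemma constraints
    have hswkj : ¬((sh.boxOf f k).1 ≤ (sh.boxOf f j).1 ∧ (sh.boxOf f k).2 ≤ (sh.boxOf f j).2) := by
      intro hcon
      have hneq : sh.boxOf f k ≠ sh.boxOf f j := by
        intro hEq; rw [hEq] at hbkv; omega
      have : f ((sh.boxOf f k).1, (sh.boxOf f k).2) < f ((sh.boxOf f j).1, (sh.boxOf f j).2) := by
        apply sw_lt hf (by simpa using hbk) (by simpa using hbj) hcon.1 hcon.2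
        intro hEq
        exact hneq (by simpa [Prod.ext_iff] using hEq)
      simp only [Prod.mk.eta] at this
      omega
    have hswik : ¬((sh.boxOf f i).1 ≤ (sh.boxOf f k).1 ∧ (sh.boxOf f i).2 ≤ (sh.boxOf f k).2) := by
      intro hcon
      have hneq : sh.boxOf f i ≠ sh.boxOf f k := by
        intro hEq; rw [hEq] at hbiv; omega
      have : f ((sh.boxOf f i).1, (sh.boxOf f i).2) < f ((sh.boxOf f k).1, (sh.boxOf f k).2) := by
        apply sw_lt hf (by simpa using hbi) (by simpa using hbk) hcon.1 hcon.2
        intro hEq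
        exact hneq (by simpa [Prod.ext_iff] using hEq)
      simp only [Prod.mk.eta] at this
      omega
    omega
  · have : i = j + 1 := by omega
    subst this
    exact ⟨j, hp⟩

/-- Swapping an adjacent inversion preserves standardness. -/
lemma sApply_SYT {f : (ℕ × ℕ) → ℕ} (hf : f ∈ sh.SYT) {m : ℕ}
    (hP : (m + 1, m) ∈ sh.invSet f) : sApply m f ∈ sh.SYT := by
  have hP' := hP
  rw [mem_invSet] at hP'
  obtain ⟨⟨hi, hj⟩, -, h1, h2⟩ := hP'
  rw [Finset.mem_Icc] at hi hj
  have hm : 1 ≤ m := hj.1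
  have hm2 : m + 1 ≤ sh.nb := hi.2
  have hjIcc : m ∈ Finset.Icc 1 sh.nb := by rw [Finset.mem_Icc]; omega
  have hiIcc : m + 1 ∈ Finset.Icc 1 sh.nb := by rw [Finset.mem_Icc]; omega
  obtain ⟨hbm, hbmv⟩ := boxOf_spec hf.1 hjIcc
  obtain ⟨hbm1, hbm1v⟩ := boxOf_spec hf.1 hiIcc
  -- helper: adjacent increase is preserved
  have key : ∀ u v : ℕ × ℕ, u ∈ sh.cells → v ∈ sh.cells → f u < f v →
      ((u.1 = v.1 ∧ u.2 + 1 = v.2) ∨ (u.1 + 1 = v.1 ∧ u.2 = v.2)) →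
      sApply m f u < sApply m f v := by
    intro u v hu hv hfuv hadj
    have hexcl : ¬(f u = m ∧ f v = m + 1) := by
      rintro ⟨hum, hvm⟩
      have heu : sh.boxOf f m = u := boxOf_eq' hf.1 hu hum
      have hev : sh.boxOf f (m + 1) = v := boxOf_eq' hf.1 hv hvm
      rw [heu] at h1 h2
      rw [hev] at h1 h2
      omega
    simp only [sApply, Equiv.swap_apply_def]
    split_ifs <;> omega
  refine ⟨sApply_isFilling hf.1 hm hm2, ?_, ?_⟩
  · intro x y hxy hxy'
    exact key (x, y) (x, y + 1) hxy hxy' (hf.2.1 x y hxy hxy') (Or.inl ⟨rfl, rfl⟩)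
  · intro x y hxy hxy'
    exact key (x, y) (x + 1, y) hxy hxy' (hf.2.2 x y hxy hxy') (Or.inr ⟨rfl, rfl⟩)

lemma wordProd_nil : wordProd [] = 1 := rfl

lemma wordProd_cons (m : ℕ) (l : List ℕ) :
    wordProd (m :: l) = Equiv.swap m (m + 1) * wordProd l := by
  simp [wordProd]

lemma wordProd_fix {n : ℕ} {l : List ℕ} (hl : IsSnWord n l) {x : ℕ}
    (hx : x ∉ Finset.Icc 1 n) : wordProd l x = x := by
  induction l with
  | nil => rfl
  | cons m is ih =>
    have hm := hl m List.mem_cons_self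
    have his : IsSnWord n is := fun i hi => hl i (List.mem_cons_of_mem m hi)
    rw [wordProd_cons, Equiv.Perm.mul_apply, ih his]
    rw [Finset.mem_Icc] at hx
    exact Equiv.swap_apply_of_ne_of_ne (by omega) (by omega)

lemma wordProd_comp_colReading (m : ℕ) (l : List ℕ) :
    (fun b => wordProd (m :: l) (sh.colReading b))
      = sApply m (fun b => wordProd l (sh.colReading b)) := by
  funext b
  rw [wordProd_cons]
  simp [sApply, Equiv.Perm.mul_apply]

lemma wordProd_filling_and_bound {n : ℕ} (hn : n = sh.nb) {l : List ℕ}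
    (hl : IsSnWord n l) :
    sh.IsFilling (fun b => wordProd l (sh.colReading b)) ∧
      (sh.invSet (fun b => wordProd l (sh.colReading b))).card ≤ l.length := by
  subst hn
  induction l with
  | nil =>
    have : (fun b => wordProd [] (sh.colReading b)) = sh.colReading := by
      funext b; rfl
    rw [this]
    exact ⟨colReading_SYT.1, by rw [invSet_colReading]; simp⟩
  | cons m is ih =>
    have hm := hl m List.mem_cons_self
    have his : IsSnWord sh.nb is := fun i hi => hl i (List.mem_cons_of_mem m hi)
    obtain ⟨ihf, ihc⟩ := ih his
    rw [wordProd_comp_colReading]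
    refine ⟨sApply_isFilling ihf hm.1 hm.2, ?_⟩
    have hid := card_invSet_sApply ihf hm.1 hm.2 (m := m)
    simp only [List.length_cons]
    split_ifs at hid <;> omega

/-- Existence of a word of length `card (invSet f)` taking the column reading
tableau to `f`. -/
lemma exists_word {f : (ℕ × ℕ) → ℕ} (hf : f ∈ sh.SYT) :
    ∃ l : List ℕ, IsSnWord sh.nb l ∧ l.length = (sh.invSet f).card ∧
      ∀ b, wordProd l (sh.colReading b) = f b := by
  generalize hcard : (sh.invSet f).card = k
  induction k using Nat.strong_induction_on generalizing f with
  | _ k ihk =>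
    rcases Nat.eq_zero_or_pos k with rfl | hpos
    · have hempty : sh.invSet f = ∅ := Finset.card_eq_zero.mp hcard
      have := eq_colReading_of_invSet_empty hf hempty
      subst this
      exact ⟨[], fun i hi => absurd hi List.not_mem_nil, rfl, fun b => rfl⟩
    · have hne : (sh.invSet f).Nonempty := by
        rw [← Finset.card_pos, hcard]; exact hpos
      obtain ⟨m, hP⟩ := exists_adj_inv hf hne
      have hg : sApply m f ∈ sh.SYT := sApply_SYT hf hP
      have hP' := hP
      rw [mem_invSet] at hP'
      obtain ⟨⟨hi, hj⟩, -, -, -⟩ := hP'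
      rw [Finset.mem_Icc] at hi hj
      have hm : 1 ≤ m := hj.1
      have hm2 : m + 1 ≤ sh.nb := hi.2
      have hid := card_invSet_sApply hf.1 hm hm2 (m := m)
      have hnotg : (m + 1, m) ∉ sh.invSet (sApply m f) :=
        not_mem_invSet_pair_both hf.1 hm hm2 hP
      rw [if_pos hP, if_neg hnotg] at hid
      have hcardg : (sh.invSet (sApply m f)).card = k - 1 := by omega
      obtain ⟨l', hl'1, hl'2, hl'3⟩ := ihk (k - 1) (by omega) hg hcardg
      refine ⟨m :: l', ?_, ?_, ?_⟩
      · intro i hi'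
        rcases List.mem_cons.mp hi' with rfl | hi'
        · exact ⟨hm, hm2⟩
        · exact hl'1 i hi'
      · simp only [List.length_cons, hl'2]; omega
      · intro b
        rw [wordProd_cons, Equiv.Perm.mul_apply, hl'3 b]
        have : Equiv.swap m (m + 1) (sApply m f b) = f b := by
          simp [sApply]
        exact this

lemma isWordOf_unique {f : (ℕ × ℕ) → ℕ} {w w' : Equiv.Perm ℕ}
    (hw : sh.IsWordOf f w) (hw' : sh.IsWordOf f w') : w = w' := by
  apply Equiv.ext
  intro x
  by_cases hx : x ∈ Finset.Icc 1 sh.nb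
  · have hx' : x ∈ sh.colReading '' ↑sh.cells := colReading_SYT.1.1.2.2 (by exact_mod_cast hx)
    obtain ⟨b, hb, rfl⟩ := hx'
    rw [hw.1 b (Finset.mem_coe.mp hb), hw'.1 b (Finset.mem_coe.mp hb)]
  · rw [hw.2 x hx, hw'.2 x hx]

end SkewShape
namespace SkewShape

variable {sh : SkewShape}

lemma SYTt_eq_iff {f g : (ℕ × ℕ) → ℕ} {hf : f ∈ sh.SYT} {hg : g ∈ sh.SYT} :
    (⟨f, hf⟩ : sh.SYTt) = ⟨g, hg⟩ ↔ f = g := Subtype.mk_eq_mk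

lemma vOf_apply (f : (ℕ × ℕ) → ℕ) {g : (ℕ × ℕ) → ℕ} (hg : g ∈ sh.SYT) :
    (sh.vOf f) ⟨g, hg⟩ = if f = g then 1 else 0 := by
  by_cases hf : f ∈ sh.SYT
  · rw [vOf, dif_pos hf]
    refine (Finsupp.single_apply (a := (⟨f, hf⟩ : sh.SYTt)) (a' := ⟨g, hg⟩) (b := (1 : ℂ))).trans ?_
    by_cases hfg : f = g
    · rw [if_pos hfg, if_pos (Subtype.ext hfg)]
    · rw [if_neg hfg, if_neg (fun h => hfg (SYTt_eq_iff.mp h))]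
  · rw [vOf, dif_neg hf]
    exact (if_neg (fun h : f = g => hf (by rw [h]; exact hg))).symm

lemma semiOp_apply_coeff {m : ℕ} (hm : 1 ≤ m) (hm2 : m + 1 ≤ sh.nb)
    (x : sh.SYTt →₀ ℂ) {g : (ℕ × ℕ) → ℕ} (hg : g ∈ sh.SYT) :
    (sh.semiOp m x) ⟨g, hg⟩ = sh.aI g m * x ⟨g, hg⟩ +
      (1 + sh.aI (sApply m g) m) *
        (if h' : sApply m g ∈ sh.SYT then x ⟨sApply m g, h'⟩ else 0) := by
  have hne : sApply m g ≠ g := sApply_ne hg.1 hm hm2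
  induction x using Finsupp.induction_linear with
  | zero =>
    change (0 : ℂ) = sh.aI g m * 0 + (1 + sh.aI (sApply m g) m) *
      (if h' : sApply m g ∈ sh.SYT then (0 : ℂ) else 0)
    simp
  | add u v hu hv =>
    erw [map_add, Finsupp.add_apply, hu, hv, Finsupp.add_apply]
    by_cases h' : sApply m g ∈ sh.SYT
    · simp only [dif_pos h', Finsupp.add_apply]
      erw [Finsupp.add_apply]
      ring
    · simp only [dif_neg h']
      ring
  | single S c =>
    obtain ⟨Sf, hS⟩ := S
    have hls : sh.semiOp m (Finsupp.single ⟨Sf, hS⟩ c) =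
        c • (sh.aI Sf m • sh.vOf Sf + (1 + sh.aI Sf m) • sh.vOf (sApply m Sf)) := by
      erw [semiOp, Finsupp.lsum_apply, Finsupp.sum_single_index]
      · rfl
      · simp
    erw [hls, Finsupp.smul_apply, Finsupp.add_apply, Finsupp.smul_apply, Finsupp.smul_apply,
      vOf_apply _ hg, vOf_apply _ hg, Finsupp.single_apply]
    by_cases h1 : Sf = g
    · subst h1
      erw [if_neg hne, if_pos rfl, if_pos (Subtype.ext rfl)]
      by_cases h' : sApply m Sf ∈ sh.SYT
      · erw [dif_pos h', Finsupp.single_apply, if_neg (fun h => hne (SYTt_eq_iff.mp h).symm)]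
        simp; ring
      · erw [dif_neg h']
        simp; ring
    · erw [if_neg h1, if_neg (fun h => h1 (SYTt_eq_iff.mp h))]
      by_cases h2 : Sf = sApply m g
      · have h' : sApply m g ∈ sh.SYT := h2 ▸ hS
        erw [dif_pos h']
        have h3 : sApply m Sf = g := by erw [h2, sApply_sApply]
        erw [if_pos h3, Finsupp.single_apply, if_pos (Subtype.ext h2)]
        subst h2
        simp
        ring
      · have h3 : sApply m Sf ≠ g := by
          intro hEq
          apply h2
          erw [← hEq, sApply_sApply]
        erw [if_neg h3]
        by_cases h' : sApply m g ∈ sh.SYT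
        · erw [dif_pos h', Finsupp.single_apply, if_neg (fun h => h2 (SYTt_eq_iff.mp h))]
          simp
        · erw [dif_neg h']
          simp
  
lemma natCoeff_nil {g : (ℕ × ℕ) → ℕ} (hg : g ∈ sh.SYT) :
    sh.natCoeff [] g = if g = sh.colReading then 1 else 0 := by
  rw [natCoeff, dif_pos hg]
  have : sh.opWord [] = LinearMap.id := rfl
  rw [this, LinearMap.id_apply, vOf_apply _ hg]
  by_cases h : g = sh.colReading
  · rw [if_pos h, if_pos h.symm]
  · rw [if_neg h, if_neg (fun h' => h h'.symm)]

lemma natCoeff_not_SYT {l : List ℕ} {g : (ℕ × ℕ) → ℕ} (hg : g ∉ sh.SYT) :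
    sh.natCoeff l g = 0 := by
  rw [natCoeff, dif_neg hg]

lemma natCoeff_cons {m : ℕ} (hm : 1 ≤ m) (hm2 : m + 1 ≤ sh.nb) {is : List ℕ}
    {g : (ℕ × ℕ) → ℕ} (hg : g ∈ sh.SYT) :
    sh.natCoeff (m :: is) g = sh.aI g m * sh.natCoeff is g +
      (1 + sh.aI (sApply m g) m) * sh.natCoeff is (sApply m g) := by
  rw [natCoeff, dif_pos hg]
  have hop : sh.opWord (m :: is) = sh.semiOp m ∘ₗ sh.opWord is := rfl
  rw [hop, LinearMap.comp_apply, semiOp_apply_coeff hm hm2 _ hg]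
  have e1 : sh.natCoeff is g = (sh.opWord is (sh.vOf sh.colReading)) ⟨g, hg⟩ := by
    rw [natCoeff, dif_pos hg]
  have e2 : sh.natCoeff is (sApply m g) =
      (if h' : sApply m g ∈ sh.SYT then (sh.opWord is (sh.vOf sh.colReading)) ⟨sApply m g, h'⟩
       else 0) := by
    rw [natCoeff]
  rw [e1, e2]

lemma natCoeff_eq_zero {l : List ℕ} (hl : IsSnWord sh.nb l) {g : (ℕ × ℕ) → ℕ}
    (hg : g ∈ sh.SYT) (h : l.length < (sh.invSet g).card) : sh.natCoeff l g = 0 := by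
  induction l generalizing g with
  | nil =>
    rw [natCoeff_nil hg]
    rw [if_neg]
    intro hEq
    rw [hEq, invSet_colReading] at h
    simp at h
  | cons m is ih =>
    have hm := hl m List.mem_cons_self
    have his : IsSnWord sh.nb is := fun i hi => hl i (List.mem_cons_of_mem m hi)
    rw [natCoeff_cons hm.1 hm.2 hg]
    have h1 : sh.natCoeff is g = 0 := by
      apply ih his hg
      simp only [List.length_cons] at h
      omega
    have h2 : sh.natCoeff is (sApply m g) = 0 := by
      by_cases h' : sApply m g ∈ sh.SYT
      · apply ih his h'
        have hid := card_invSet_sApply hg.1 hm.1 hm.2 (m := m)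
        simp only [List.length_cons] at h
        split_ifs at hid <;> omega
      · exact natCoeff_not_SYT h'
    rw [h1, h2]
    ring

end SkewShape
namespace SkewShape

variable {sh : SkewShape}

lemma prod_step {T : (ℕ × ℕ) → ℕ} (hT : T ∈ sh.SYT) {m : ℕ}
    (hP : (m + 1, m) ∈ sh.invSet T) :
    ∏ p ∈ sh.invSet T, (1 + sh.aIJ T p.1 p.2)
      = (1 + sh.aI (sApply m T) m) *
        ∏ p ∈ sh.invSet (sApply m T), (1 + sh.aIJ (sApply m T) p.1 p.2) := by
  classical
  have hPIcc := hP
  rw [mem_invSet] at hPIcc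
  obtain ⟨⟨hi, hj⟩, -, -, -⟩ := hPIcc
  rw [Finset.mem_Icc] at hi hj
  have hm : 1 ≤ m := hj.1
  have hm2 : m + 1 ≤ sh.nb := hi.2
  have hiI : m + 1 ∈ Finset.Icc 1 sh.nb := by rw [Finset.mem_Icc]; omega
  have hjI : m ∈ Finset.Icc 1 sh.nb := by rw [Finset.mem_Icc]; omega
  set F := sApply m T with hF
  have hFfill : sh.IsFilling F := sApply_isFilling hT.1 hm hm2
  have hPF : (m + 1, m) ∉ sh.invSet F := not_mem_invSet_pair_both hT.1 hm hm2 hP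
  set σ : ℕ × ℕ → ℕ × ℕ :=
    fun p => (Equiv.swap m (m + 1) p.1, Equiv.swap m (m + 1) p.2) with hσ
  have hσinj : Function.Injective σ := by
    intro p q hpq
    simp only [hσ, Prod.mk.injEq] at hpq
    exact Prod.ext ((Equiv.swap m (m + 1)).injective hpq.1)
      ((Equiv.swap m (m + 1)).injective hpq.2)
  have hset : sh.invSet T = insert (m + 1, m) ((sh.invSet F).image σ) := by
    apply Finset.Subset.antisymm
    · intro q hq
      by_cases hqP : q = (m + 1, m)
      · rw [hqP]; exact Finset.mem_insert_self _ _
      · apply Finset.mem_insert_of_mem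
        rw [Finset.mem_image]
        obtain ⟨q1, q2⟩ := q
        refine ⟨σ (q1, q2), ?_, ?_⟩
        · exact invSet_relabel hT.1 hm hm2 hq hqP
        · simp [hσ, Equiv.swap_apply_self]
    · intro q hq
      rcases Finset.mem_insert.mp hq with rfl | hq
      · exact hP
      · rw [Finset.mem_image] at hq
        obtain ⟨p, hp, rfl⟩ := hq
        obtain ⟨p1, p2⟩ := p
        have hpne : (p1, p2) ≠ (m + 1, m) := by
          intro hEq; rw [hEq] at hp; exact hPF hp
        have := invSet_relabel hFfill hm hm2 hp hpne
        rwa [hF, sApply_sApply] at this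
  have hPimg : (m + 1, m) ∉ (sh.invSet F).image σ := by
    rw [Finset.mem_image]
    rintro ⟨⟨p1, p2⟩, hp, hEq⟩
    simp only [hσ, Prod.mk.injEq] at hEq
    have hp1 : p1 = m := by
      have h3 := congrArg (Equiv.swap m (m+1)) hEq.1
      rwa [Equiv.swap_apply_self, Equiv.swap_apply_right] at h3
    have hp2 : p2 = m + 1 := by
      have h3 := congrArg (Equiv.swap m (m+1)) hEq.2
      rwa [Equiv.swap_apply_self, Equiv.swap_apply_left] at h3
    subst hp1; subst hp2
    rw [mem_invSet] at hp
    omega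
  rw [hset, Finset.prod_insert hPimg, Finset.prod_image (fun p _ q _ h => hσinj h)]
  congr 1
  · -- 1 + aIJ T (m+1) m = 1 + aI F m
    have e1 : sh.boxOf F (m + 1) = sh.boxOf T m := by
      rw [hF, boxOf_sApply hT.1 hm hm2 hiI, Equiv.swap_apply_right]
    have e2 : sh.boxOf F m = sh.boxOf T (m + 1) := by
      rw [hF, boxOf_sApply hT.1 hm hm2 hjI, Equiv.swap_apply_left]
    rw [aI, aIJ, aIJ, e1, e2]
  · apply Finset.prod_congr rfl
    intro p hp
    obtain ⟨p1, p2⟩ := p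
    have hpIcc := hp
    rw [mem_invSet] at hpIcc
    obtain ⟨⟨hp1, hp2⟩, -, -, -⟩ := hpIcc
    have hTF : sApply m F = T := by rw [hF, sApply_sApply]
    have e1 : sh.boxOf T (Equiv.swap m (m + 1) p1) = sh.boxOf F p1 := by
      rw [← hTF, boxOf_sApply hFfill hm hm2 (swap_mem_Icc hm hm2 hp1),
        Equiv.swap_apply_self]
    have e2 : sh.boxOf T (Equiv.swap m (m + 1) p2) = sh.boxOf F p2 := by
      rw [← hTF, boxOf_sApply hFfill hm hm2 (swap_mem_Icc hm hm2 hp2),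
        Equiv.swap_apply_self]
    simp only [hσ, aIJ, e1, e2]

end SkewShape
namespace SkewShape

variable {sh : SkewShape}

lemma main_induction {l : List ℕ} :
    ∀ T : (ℕ × ℕ) → ℕ, T ∈ sh.SYT → IsSnWord sh.nb l →
      (∀ b, wordProd l (sh.colReading b) = T b) → l.length = (sh.invSet T).card →
      sh.natCoeff l T = ∏ p ∈ sh.invSet T, (1 + sh.aIJ T p.1 p.2) := by
  induction l with
  | nil =>
    intro T hT _ hword hlen
    have hempty : sh.invSet T = ∅ := Finset.card_eq_zero.mp hlen.symm
    have hTC : T = sh.colReading := eq_colReading_of_invSet_empty hT hempty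
    rw [natCoeff_nil hT, if_pos hTC, hempty, Finset.prod_empty]
  | cons m is ih =>
    intro T hT hSn hword hlen
    have hm := hSn m List.mem_cons_self
    have his : IsSnWord sh.nb is := fun i hi => hSn i (List.mem_cons_of_mem m hi)
    have hTF : (fun b => wordProd is (sh.colReading b)) = sApply m T := by
      funext b
      have h1 : wordProd (m :: is) (sh.colReading b) = T b := hword b
      rw [wordProd_cons, Equiv.Perm.mul_apply] at h1
      have := congrArg (Equiv.swap m (m + 1)) h1
      rw [Equiv.swap_apply_self] at this
      rw [this]; rfl
    have hbound := (wordProd_filling_and_bound rfl his).2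
    rw [hTF] at hbound
    have hid := card_invSet_sApply hT.1 hm.1 hm.2 (m := m)
    simp only [List.length_cons] at hlen
    have hPT : (m + 1, m) ∈ sh.invSet T := by
      by_contra hPT
      rw [if_neg hPT] at hid
      split_ifs at hid <;> omega
    have hPF : (m + 1, m) ∉ sh.invSet (sApply m T) :=
      not_mem_invSet_pair_both hT.1 hm.1 hm.2 hPT
    rw [if_pos hPT, if_neg hPF] at hid
    have hcardF : (sh.invSet (sApply m T)).card = is.length := by omega
    have hFst : sApply m T ∈ sh.SYT := sApply_SYT hT hPT
    rw [natCoeff_cons hm.1 hm.2 hT]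
    have h0 : sh.natCoeff is T = 0 := by
      apply natCoeff_eq_zero his hT
      omega
    have hIH : sh.natCoeff is (sApply m T)
        = ∏ p ∈ sh.invSet (sApply m T), (1 + sh.aIJ (sApply m T) p.1 p.2) := by
      apply ih (sApply m T) hFst his (fun b => congrFun hTF b) hcardF.symm
    rw [h0, hIH, prod_step hT hPT]
    ring

end SkewShape


/-- **Proposition (diagonal entries).**
For any `T ∈ SYT(λ/μ)`, the diagonal transition coefficient satisfies
`A_{T,T} = ∏_{(i,j) ∈ inv(T)} (1 + a_{i,j}(T))`, the product being over all inversions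
of `T`.  Here `A_{T,T}` is the coefficient of `v_T` in `n_T`, computed from any reduced
word for `w_T`. -/
theorem diagonal_transition_coefficient
    (sh : SkewShape) (T : (ℕ × ℕ) → ℕ) (hT : T ∈ sh.SYT)
    (w : Equiv.Perm ℕ) (hw : sh.IsWordOf T w)
    (l : List ℕ) (hl : IsReducedWord sh.nb w l) :
    sh.natCoeff l T = ∏ p ∈ sh.invSet T, (1 + sh.aIJ T p.1 p.2) := by
  obtain ⟨hSn, hprod, hmin⟩ := hl
  have hword : ∀ b, wordProd l (sh.colReading b) = T b := by
    intro b
    rw [hprod]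
    by_cases hb : b ∈ sh.cells
    · exact hw.1 b hb
    · rw [SkewShape.colReading, if_neg hb, hw.2 0 (by simp), hT.1.2 b hb]
  -- upper bound on the length via the constructed word
  obtain ⟨l₀, h₀Sn, h₀len, h₀word⟩ := SkewShape.exists_word hT
  have hW0 : sh.IsWordOf T (wordProd l₀) :=
    ⟨fun b _ => h₀word b, fun x hx => SkewShape.wordProd_fix h₀Sn hx⟩
  have hEq : wordProd l₀ = w := SkewShape.isWordOf_unique hW0 hw
  have hupper : l.length ≤ (sh.invSet T).card := h₀len ▸ hmin l₀ h₀Sn hEq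
  -- lower bound via the inversion-count path bound
  have hlower : (sh.invSet T).card ≤ l.length := by
    have h := (SkewShape.wordProd_filling_and_bound rfl hSn).2
    have hfun : (fun b => wordProd l (sh.colReading b)) = T := funext hword
    rwa [hfun] at h
  exact SkewShape.main_induction T hT hSn hword (by omega)
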